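/- For all real x > -1, log(1+x) ≤ x - 3x²/(6+4x). -/

import Mathlib

open Real Set

/-- `x - 3x²/(6 + 4x) = x(6 + x)/(6 + 4x)` is the `[2/1]` Padé approximant of `log (1 + x)` at `0`. -/
noncomputable def logPadeGap (x : ℝ) : ℝ := x - 3 * x ^ 2 / (6 + 4 * x) - log (1 + x)

@[simp]
lemma logPadeGap_zero : logPadeGap 0 = 0 := by simp [logPadeGap]

lemma hasDerivAt_logPadeGap {x : ℝ} (hx : -1 < x) :
    HasDerivAt logPadeGap (4 * x ^ 3 / ((1 + x) * (6 + 4 * x) ^ 2)) x := by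
  have h1 : 1 + x ≠ 0 := by linarith
  have h2 : 6 + 4 * x ≠ 0 := by linarith
  have hquot : HasDerivAt (fun y : ℝ => 3 * y ^ 2 / (6 + 4 * y))
      ((3 * (2 * x) * (6 + 4 * x) - 3 * x ^ 2 * 4) / (6 + 4 * x) ^ 2) x := by
    refine HasDerivAt.div ?_ ?_ h2
    · simpa using (hasDerivAt_pow 2 x).const_mul 3
    · simpa using ((hasDerivAt_id x).const_mul 4).const_add 6
  have hlog : HasDerivAt (fun y : ℝ => log (1 + y)) (1 / (1 + x)) x := by
    simpa using ((hasDerivAt_id x).const_add 1).log h1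
  exact (((hasDerivAt_id' x).sub hquot).sub hlog).congr_deriv (by grind)

lemma deriv_logPadeGap {x : ℝ} (hx : -1 < x) :
    deriv logPadeGap x = 4 * x ^ 3 / ((1 + x) * (6 + 4 * x) ^ 2) :=
  (hasDerivAt_logPadeGap hx).deriv

lemma differentiableOn_logPadeGap : DifferentiableOn ℝ logPadeGap (Ioi (-1)) :=
  fun _ hx ↦ (hasDerivAt_logPadeGap hx).differentiableAt.differentiableWithinAt

/-- The derivative `4x³/((1 + x)(6 + 4x)²)` has the sign of `x`, so `0` is a global minimum. -/
lemma isMinOn_logPadeGap : IsMinOn logPadeGap (Ioi (-1)) 0 := by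
  refine isMinOn_Ioi_of_deriv (hasDerivAt_logPadeGap (by norm_num)).continuousAt
    (differentiableOn_logPadeGap.mono Ioo_subset_Ioi_self)
    (differentiableOn_logPadeGap.mono (Ioi_subset_Ioi (by norm_num))) ?_ ?_
  · rintro y ⟨hy, hy0⟩
    have : 0 < 1 + y := by linarith
    rw [deriv_logPadeGap hy]
    exact div_nonpos_of_nonpos_of_nonneg (by nlinarith [sq_nonneg y]) (by positivity)
  · intro y (hy : 0 < y)
    rw [deriv_logPadeGap (by linarith)]
    positivity

theorem log_one_add_le (x : ℝ) (hx : -1 < x) :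
    Real.log (1 + x) ≤ x - 3 * x ^ 2 / (6 + 4 * x) := by
  have h : logPadeGap 0 ≤ logPadeGap x := isMinOn_logPadeGap hx
  rw [logPadeGap_zero, logPadeGap] at h
  linarith
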